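/- Privacy amplification by a Dobrushin post-processing kernel (Lemma 1): Let X be a type with an adjacency relation Adj, and let Y, Z be measurable spaces. Let A : X → Measure Y be a mechanism with each A x a probability measure satisfying (ε, δ)-differential privacy with ε ≥ 0 and δ ≥ 0. Let C : Y → Measure Z be a Markov kernel (each C y a probability measure and y ↦ C y measurable) that is λ-Dobrushin with 0 ≤ λ ≤ 1, i.e. for all y, y' ∈ Y and every measurable set S ⊆ Z, (C y) S ≤ (C y') S + λ. Then the composed mechanism x ↦ (A x).bind C satisfies (ε, λ·δ)-differential privacy. -/

import Mathlib

open MeasureTheory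

/-- A mechanism `A : X → Measure Y` (each `A x` a probability measure) satisfies
`(ε, δ)`-differential privacy with respect to the adjacency relation `Adj`. -/
def DiffPrivate {X Y : Type*} [MeasurableSpace Y] (Adj : X → X → Prop)
    (A : X → Measure Y) (ε δ : ℝ) : Prop :=
  ∀ x x', Adj x x' → ∀ S : Set Y, MeasurableSet S →
    A x S ≤ ENNReal.ofReal (Real.exp ε) * A x' S + ENNReal.ofReal δ

/-!
Write `f y = (C y) S`. The Dobrushin condition says that `f` oscillates by at most `λ`, so
`f = m + g` with `m = inf f` and `0 ≤ g ≤ λ`. By the layer-cake formula `∫ g dμ` is the integral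
over `t ∈ (0, λ]` of `μ {g > t}`, and applying the `(ε, δ)`-inequality to every level set costs
`δ` per unit length of `t`, i.e. `λ δ` in total. The constant part `m` only needs `e^ε ≥ 1`.
-/

open Set ENNReal

section LevelSets

variable {Y : Type*} [MeasurableSpace Y]

theorem lintegral_ofReal_eq_setLIntegral_Ioc_meas_lt (μ : Measure Y) {g : Y → ℝ} {b : ℝ}
    (hb : 0 ≤ b) (hg : Measurable g) (hg0 : 0 ≤ g) (hgb : ∀ y, g y ≤ b) :
    ∫⁻ y, ENNReal.ofReal (g y) ∂μ = ∫⁻ t in Ioc 0 b, μ {y | t < g y} := by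
  have hvanish : ∀ t ∈ Ioi b, μ {y | t < g y} = 0 := fun t ht => by
    rw [eq_empty_of_forall_notMem (s := {y | t < g y}) fun y => ((hgb y).trans ht.le).not_gt,
      measure_empty]
  rw [lintegral_eq_lintegral_meas_lt μ (.of_forall hg0) hg.aemeasurable,
    ← Ioc_union_Ioi_eq_Ioi hb, lintegral_union measurableSet_Ioi (Ioc_disjoint_Ioi le_rfl),
    setLIntegral_congr_fun measurableSet_Ioi hvanish, lintegral_zero, add_zero]

theorem lintegral_ofReal_le_mul_lintegral_add_of_measure_le {μ ν : Measure Y} {c d : ℝ≥0∞}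
    (hμν : ∀ S, MeasurableSet S → μ S ≤ c * ν S + d) {g : Y → ℝ} {b : ℝ} (hb : 0 ≤ b)
    (hg : Measurable g) (hg0 : 0 ≤ g) (hgb : ∀ y, g y ≤ b) :
    ∫⁻ y, ENNReal.ofReal (g y) ∂μ
      ≤ c * ∫⁻ y, ENNReal.ofReal (g y) ∂ν + ENNReal.ofReal b * d := by
  have hlevel : ∀ t, MeasurableSet {y | t < g y} := fun t => measurableSet_lt measurable_const hg
  have htail : Measurable fun t : ℝ => ν {y | t < g y} :=
    Antitone.measurable fun s t hst => measure_mono fun y hy => hst.trans_lt hy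
  rw [lintegral_ofReal_eq_setLIntegral_Ioc_meas_lt μ hb hg hg0 hgb,
    lintegral_ofReal_eq_setLIntegral_Ioc_meas_lt ν hb hg hg0 hgb]
  calc ∫⁻ t in Ioc 0 b, μ {y | t < g y}
      ≤ ∫⁻ t in Ioc 0 b, (c * ν {y | t < g y} + d) :=
        lintegral_mono fun t => hμν _ (hlevel t)
    _ = c * (∫⁻ t in Ioc 0 b, ν {y | t < g y}) + ENNReal.ofReal b * d := by
        rw [lintegral_add_right _ measurable_const, lintegral_const_mul _ htail,
          setLIntegral_const, Real.volume_Ioc, sub_zero, mul_comm d]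

theorem lintegral_le_mul_lintegral_add_of_oscillation_le {μ ν : Measure Y}
    [IsProbabilityMeasure μ] [IsProbabilityMeasure ν] {c d : ℝ≥0∞} (hc : 1 ≤ c)
    (hμν : ∀ S, MeasurableSet S → μ S ≤ c * ν S + d) {f : Y → ℝ≥0∞} {b : ℝ} (hb : 0 ≤ b)
    (hf : Measurable f) (hf_top : ∀ y, f y ≠ ∞)
    (hosc : ∀ y y', f y ≤ f y' + ENNReal.ofReal b) :
    ∫⁻ y, f y ∂μ ≤ c * ∫⁻ y, f y ∂ν + ENNReal.ofReal b * d := by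
  set m := ⨅ y, f y
  set g : Y → ℝ := fun y => (f y - m).toReal
  have hf_eq : ∀ y, f y = m + ENNReal.ofReal (g y) := fun y => by
    rw [ofReal_toReal (sub_ne_top (hf_top y)), add_tsub_cancel_of_le (iInf_le f y)]
  have hgb : ∀ y, g y ≤ b := fun y =>
    toReal_le_of_le_ofReal hb <| tsub_le_iff_left.2 <| tsub_le_iff_right.1 <|
      le_iInf fun y' => tsub_le_iff_right.2 (hosc y y')
  have hg : Measurable g := (hf.sub measurable_const).ennreal_toReal
  have hint : ∀ (ρ : Measure Y) [IsProbabilityMeasure ρ],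
      ∫⁻ y, f y ∂ρ = m + ∫⁻ y, ENNReal.ofReal (g y) ∂ρ := fun ρ _ => by
    simp_rw [hf_eq]
    rw [lintegral_add_left measurable_const, lintegral_const, measure_univ, mul_one]
  calc ∫⁻ y, f y ∂μ
      ≤ m + (c * ∫⁻ y, ENNReal.ofReal (g y) ∂ν + ENNReal.ofReal b * d) := by
        rw [hint μ]
        gcongr
        exact lintegral_ofReal_le_mul_lintegral_add_of_measure_le hμν hb hg
          (fun y => toReal_nonneg) hgb
    _ ≤ c * m + (c * ∫⁻ y, ENNReal.ofReal (g y) ∂ν + ENNReal.ofReal b * d) := by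
        gcongr
        exact le_mul_of_one_le_left zero_le hc
    _ = c * ∫⁻ y, f y ∂ν + ENNReal.ofReal b * d := by
        rw [hint ν, mul_add, add_assoc]

end LevelSets

theorem privacy_amplification_dobrushin
    {X Y Z : Type*} [MeasurableSpace Y] [MeasurableSpace Z]
    (Adj : X → X → Prop) (ε δ lam : ℝ) (hε : 0 ≤ ε)
    (hlam0 : 0 ≤ lam)
    (A : X → Measure Y) (hA : ∀ x, IsProbabilityMeasure (A x))
    (hADP : DiffPrivate Adj A ε δ)
    (C : Y → Measure Z) (hC : ∀ y, IsProbabilityMeasure (C y))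
    (hCmeas : Measurable C)
    (hDob : ∀ y y' : Y, ∀ S : Set Z, MeasurableSet S →
      C y S ≤ C y' S + ENNReal.ofReal lam) :
    DiffPrivate Adj (fun x => (A x).bind C) ε (lam * δ) := by
  intro x x' hadj S hS
  rw [Measure.bind_apply hS hCmeas.aemeasurable, Measure.bind_apply hS hCmeas.aemeasurable,
    ENNReal.ofReal_mul hlam0]
  exact lintegral_le_mul_lintegral_add_of_oscillation_le
    (one_le_ofReal.2 (Real.one_le_exp hε)) (hADP x x' hadj) hlam0
    ((Measure.measurable_coe hS).comp hCmeas) (fun y => measure_ne_top (C y) S)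
    (fun y y' => hDob y y' S hS)
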